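/- In any homogeneous interval structure S, a propositional letter p holds at an interval I if and only if the formula everywhere(p) = (π ∧ p) ∨ (⟨B⟩(π ∧ p) ∧ ⟨E⟩(π ∧ p) ∧ [B](π ∨ ⟨E⟩(π ∧ p))) holds at I. -/

import Mathlib

/-- An interval `[lo, hi]` over the natural numbers. -/
structure Itv where
  lo : ℕ
  hi : ℕ
  le : lo ≤ hi

/-- The singleton interval `[x, x]`. -/
def Itv.sing (x : ℕ) : Itv := ⟨x, x, le_rfl⟩

/-- `J` is a proper prefix of `I`. -/
def isPrefix (J I : Itv) : Prop := J.lo = I.lo ∧ J.hi < I.hi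

/-- `J` is a proper suffix of `I`. -/
def isSuffix (J I : Itv) : Prop := J.hi = I.hi ∧ I.lo < J.lo

/-- Formulas of the logic BE over a signature `Sig`. -/
inductive BE (Sig : Type) : Type
  | atom : Sig → BE Sig
  | neg : BE Sig → BE Sig
  | or : BE Sig → BE Sig → BE Sig
  | diaB : BE Sig → BE Sig
  | diaE : BE Sig → BE Sig

/-- Satisfaction of a BE formula at an interval, given a labelling `σ`. -/
def sat {Sig : Type} (σ : Itv → Set Sig) : Itv → BE Sig → Prop
  | I, .atom p => p ∈ σ I
  | I, .neg φ => ¬ sat σ I φ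
  | I, .or φ ψ => sat σ I φ ∨ sat σ I ψ
  | I, .diaB φ => ∃ J, isPrefix J I ∧ sat σ J φ
  | I, .diaE φ => ∃ J, isSuffix J I ∧ sat σ J φ

/-- Conjunction, defined from negation and disjunction. -/
def BE.and {Sig : Type} (a b : BE Sig) : BE Sig := .neg (.or (.neg a) (.neg b))

/-- The box modality `[B]`. -/
def BE.boxB {Sig : Type} (a : BE Sig) : BE Sig := .neg (.diaB (.neg a))

/-- The box modality `[E]`. -/
def BE.boxE {Sig : Type} (a : BE Sig) : BE Sig := .neg (.diaE (.neg a))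

/-- A contradiction `p ∧ ¬p`. -/
def BE.ffalse {Sig : Type} (p : Sig) : BE Sig := BE.and (.atom p) (.neg (.atom p))

/-- The formula `π = [B]⊥`, true exactly at singleton intervals. -/
def BE.pi {Sig : Type} (p : Sig) : BE Sig := BE.boxB (BE.ffalse p)

/-- A labelling is homogeneous if the label of any interval is the
intersection of the labels of its singleton sub-intervals. -/
def Homog {Sig : Type} (σ : Itv → Set Sig) : Prop :=
  ∀ I : Itv, σ I = {p | ∀ x, I.lo ≤ x → x ≤ I.hi → p ∈ σ (Itv.sing x)}

/-- The formula `everywhere(p)`. -/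
def everywhere {Sig : Type} (p : Sig) : BE Sig :=
  .or (BE.and (BE.pi p) (.atom p))
      (BE.and (.diaB (BE.and (BE.pi p) (.atom p)))
        (BE.and (.diaE (BE.and (BE.pi p) (.atom p)))
          (BE.boxB (.or (BE.pi p) (.diaE (BE.and (BE.pi p) (.atom p)))))))

/-! In any interval structure, homogeneous or not, `everywhere p` holds at `I` exactly when `p`
holds at every point of `I`: the first two conjuncts pin down the endpoints, and the box over the
proper prefixes `[lo, y]` reaches each interior point `y` as the right end of such a prefix.
Homogeneity says that `p` holds at `I` under the same condition. -/

theorem Itv.eq_sing_of_lo_eq_hi {I : Itv} (h : I.lo = I.hi) : I = Itv.sing I.lo := by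
  obtain ⟨lo, hi, _⟩ := I
  simp only [Itv.sing] at h ⊢
  subst h
  rfl

section Semantics

variable {Sig : Type} (σ : Itv → Set Sig) (p : Sig)

@[simp]
theorem sat_atom (I : Itv) : sat σ I (.atom p) ↔ p ∈ σ I := Iff.rfl

@[simp]
theorem sat_or (a b : BE Sig) (I : Itv) : sat σ I (a.or b) ↔ sat σ I a ∨ sat σ I b := Iff.rfl

@[simp]
theorem sat_diaB (a : BE Sig) (I : Itv) :
    sat σ I a.diaB ↔ ∃ J, isPrefix J I ∧ sat σ J a := Iff.rfl

@[simp]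
theorem sat_diaE (a : BE Sig) (I : Itv) :
    sat σ I a.diaE ↔ ∃ J, isSuffix J I ∧ sat σ J a := Iff.rfl

@[simp]
theorem sat_and (a b : BE Sig) (I : Itv) :
    sat σ I (a.and b) ↔ sat σ I a ∧ sat σ I b := by
  simp only [BE.and, sat, not_or, not_not]

@[simp]
theorem sat_boxB (a : BE Sig) (I : Itv) :
    sat σ I a.boxB ↔ ∀ J, isPrefix J I → sat σ J a := by
  simp only [BE.boxB, sat, not_exists, not_and, not_not]

theorem sat_pi_iff (I : Itv) : sat σ I (BE.pi p) ↔ I.lo = I.hi := by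
  simp only [BE.pi, BE.ffalse, sat_boxB, sat_and, sat, and_not_self, imp_false]
  constructor
  · intro hno
    by_contra hne
    exact hno (Itv.sing I.lo) ⟨rfl, lt_of_le_of_ne I.le hne⟩
  · rintro heq J ⟨hlo, hhi⟩
    have := J.le
    omega

theorem sat_pi_and_atom_iff (I : Itv) :
    sat σ I ((BE.pi p).and (.atom p)) ↔ I.lo = I.hi ∧ p ∈ σ (Itv.sing I.lo) := by
  rw [sat_and, sat_pi_iff]
  constructor
  · rintro ⟨heq, hp⟩
    exact ⟨heq, Itv.eq_sing_of_lo_eq_hi heq ▸ hp⟩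
  · rintro ⟨heq, hp⟩
    exact ⟨heq, (Itv.eq_sing_of_lo_eq_hi heq).symm ▸ hp⟩

theorem sat_diaB_pi_and_atom_iff (I : Itv) :
    sat σ I (.diaB ((BE.pi p).and (.atom p))) ↔ I.lo < I.hi ∧ p ∈ σ (Itv.sing I.lo) := by
  simp only [sat_diaB, sat_pi_and_atom_iff, isPrefix]
  constructor
  · rintro ⟨J, ⟨hlo, hhi⟩, heq, hp⟩
    exact ⟨by omega, hlo ▸ hp⟩
  · rintro ⟨hlt, hp⟩
    exact ⟨Itv.sing I.lo, ⟨rfl, hlt⟩, rfl, hp⟩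

theorem sat_diaE_pi_and_atom_iff (I : Itv) :
    sat σ I (.diaE ((BE.pi p).and (.atom p))) ↔ I.lo < I.hi ∧ p ∈ σ (Itv.sing I.hi) := by
  simp only [sat_diaE, sat_pi_and_atom_iff, isSuffix]
  constructor
  · rintro ⟨J, ⟨hhi, hlo⟩, heq, hp⟩
    exact ⟨by omega, (heq.trans hhi) ▸ hp⟩
  · rintro ⟨hlt, hp⟩
    exact ⟨Itv.sing I.hi, ⟨rfl, hlt⟩, rfl, hp⟩

theorem sat_boxB_pi_or_diaE_iff (I : Itv) :
    sat σ I ((BE.pi p).or (.diaE ((BE.pi p).and (.atom p)))).boxB ↔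
      ∀ y, I.lo < y → y < I.hi → p ∈ σ (Itv.sing y) := by
  simp only [sat_boxB, sat_or, sat_pi_iff, sat_diaE_pi_and_atom_iff, isPrefix]
  constructor
  · intro hJ y hlo hhi
    exact ((hJ ⟨I.lo, y, hlo.le⟩ ⟨rfl, hhi⟩).resolve_left hlo.ne).2
  · rintro hy J ⟨hlo, hhi⟩
    rcases J.le.eq_or_lt with heq | hlt
    · exact Or.inl heq
    · exact Or.inr ⟨hlt, hy J.hi (hlo ▸ hlt) hhi⟩

theorem sat_everywhere_iff (I : Itv) :
    sat σ I (everywhere p) ↔ ∀ x, I.lo ≤ x → x ≤ I.hi → p ∈ σ (Itv.sing x) := by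
  rw [everywhere, sat_or, sat_pi_and_atom_iff, sat_and, sat_and, sat_diaB_pi_and_atom_iff,
    sat_diaE_pi_and_atom_iff, sat_boxB_pi_or_diaE_iff]
  rcases I.le.eq_or_lt with heq | hlt
  · refine ⟨?_, fun hx => Or.inl ⟨heq, hx I.lo le_rfl I.le⟩⟩
    rintro (⟨-, hp⟩ | ⟨⟨hlt, -⟩, -⟩)
    · intro x hlo hhi
      obtain rfl : x = I.lo := by omega
      exact hp
    · omega
  · constructor
    · rintro (⟨heq, -⟩ | ⟨⟨-, hlo⟩, ⟨-, hhi⟩, hmid⟩)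
      · omega
      · intro x hx₁ hx₂
        rcases hx₁.eq_or_lt with rfl | hx₁
        · exact hlo
        rcases hx₂.eq_or_lt with rfl | hx₂
        · exact hhi
        exact hmid x hx₁ hx₂
    · intro hx
      exact Or.inr ⟨⟨hlt, hx _ le_rfl I.le⟩, ⟨hlt, hx _ I.le le_rfl⟩,
        fun y hy₁ hy₂ => hx y hy₁.le hy₂.le⟩

end Semantics

/-- In a homogeneous interval structure, a letter `p` holds at `I` iff the
formula `everywhere(p)` holds at `I`. -/
theorem everywhere_iff {Sig : Type} (σ : Itv → Set Sig) (h : Homog σ)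
    (p : Sig) (I : Itv) :
    sat σ I (.atom p) ↔ sat σ I (everywhere p) := by
  rw [sat_everywhere_iff, sat_atom, h I, Set.mem_ofPred_eq]
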